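/- Let μ = (μ₁, μ₂, μ₃) : ℝ⁶ → ℝ³ with μ₁ = zb + yc, μ₂ = az + xc, μ₃ = −ay + bx. Then the rank of the derivative Dμ (i.e. the dimension of the range of the Fréchet derivative of μ, a linear map ℝ⁶ → ℝ³) equals 2 at every point of the form (q, 0) with q = (x,y,z) ≠ 0 (the zero section minus the origin) and at every point of the form (0, p) with p = (a,b,c) ≠ 0 (the fiber over the origin minus the origin). -/

import Mathlib

noncomputable section

/-- `ℝ⁶ = T*ℝ³` with base coordinates `q = (x,y,z)` and fiber coordinates `p = (a,b,c)`. -/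
abbrev E6 : Type := (Fin 3 → ℝ) × (Fin 3 → ℝ)

/-- Moment map component `μ₁ = zb + yc`. -/
def mu1 (w : E6) : ℝ := w.1 2 * w.2 1 + w.1 1 * w.2 2

/-- Moment map component `μ₂ = az + xc`. -/
def mu2 (w : E6) : ℝ := w.2 0 * w.1 2 + w.1 0 * w.2 2

/-- Moment map component `μ₃ = −ay + bx`. -/
def mu3 (w : E6) : ℝ := -(w.2 0 * w.1 1) + w.2 1 * w.1 0

/-- The moment map `μ = (μ₁, μ₂, μ₃) : ℝ⁶ → ℝ³`. -/
def muMap (w : E6) : Fin 3 → ℝ := ![mu1 w, mu2 w, mu3 w]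

/-!
Up to sign changes of coordinates, the moment map is a cross product:
`μ(q, p) = σ₁ (σ₂ q × p)`, where `σᵢ` negates the `i`-th coordinate (counting from `0`).
Being bilinear, `μ` has derivative `w ↦ μ(q, w)` at `(q, 0)` and `v ↦ μ(v, p)` at `(0, p)`;
up to linear isomorphisms these are the cross products with the nonzero vectors `σ₂ q` and `p`.
The kernel of `k × ·` is the line `span {k}`, so its rank is `3 - 1 = 2`.
-/

open LinearMap Module Matrix

theorem ker_crossProduct {F : Type*} [Field F] {k : Fin 3 → F} (hk : k ≠ 0) :
    ker (crossProduct k) = F ∙ k := by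
  ext w
  rw [mem_ker, Submodule.mem_span_singleton, ← not_iff_not, ← Ne,
    crossProduct_ne_zero_iff_linearIndependent, LinearIndependent.pair_iff' hk]
  simp

theorem finrank_range_crossProduct {F : Type*} [Field F] {k : Fin 3 → F} (hk : k ≠ 0) :
    finrank F (range (crossProduct k)) = 2 := by
  have h := (crossProduct k).finrank_range_add_finrank_ker
  rw [ker_crossProduct hk, finrank_span_singleton hk, finrank_fin_fun] at h
  omega

section Bilinear

variable {𝕜 E F G : Type*} [NontriviallyNormedField 𝕜] [NormedAddCommGroup E] [NormedSpace 𝕜 E]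
  [NormedAddCommGroup F] [NormedSpace 𝕜 F] [NormedAddCommGroup G] [NormedSpace 𝕜 G]

theorem range_fderiv_bilinear_at_inl (B : E →L[𝕜] F →L[𝕜] G) (q : E) :
    range (fderiv 𝕜 (fun w : E × F => B w.1 w.2) (q, 0) : E × F →ₗ[𝕜] G) =
      range (B q : F →ₗ[𝕜] G) := by
  have hd : fderiv 𝕜 (fun w : E × F => B w.1 w.2) (q, 0) = (B q).comp (.snd 𝕜 E F) := by
    ext v <;> simp [B.isBoundedBilinearMap.fderiv]
  rw [hd]
  exact range_comp_of_range_eq_top _ Submodule.range_snd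

theorem range_fderiv_bilinear_at_inr (B : E →L[𝕜] F →L[𝕜] G) (p : F) :
    range (fderiv 𝕜 (fun w : E × F => B w.1 w.2) (0, p) : E × F →ₗ[𝕜] G) =
      range (B.flip p : E →ₗ[𝕜] G) := by
  have hd : fderiv 𝕜 (fun w : E × F => B w.1 w.2) (0, p) = (B.flip p).comp (.fst 𝕜 E F) := by
    ext v <;> simp [B.isBoundedBilinearMap.fderiv]
  rw [hd]
  exact range_comp_of_range_eq_top _ Submodule.range_fst

end Bilinear

section NegCoord

variable {ι R : Type*} [CommRing R] [DecidableEq ι]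

def negCoord (i : ι) : (ι → R) ≃ₗ[R] (ι → R) :=
  LinearEquiv.piCongrRight fun j => if j = i then LinearEquiv.neg R else LinearEquiv.refl R R

@[simp]
theorem negCoord_apply (i j : ι) (v : ι → R) :
    negCoord i v j = if j = i then -v j else v j := by
  unfold negCoord
  split_ifs <;> simp [*]

end NegCoord

local notation "ℝ³" => Fin 3 → ℝ

theorem muMap_eq_negCoord_cross (q p : ℝ³) :
    muMap (q, p) = negCoord 1 (negCoord 2 q ⨯₃ p) := by
  ext i
  fin_cases i <;> simp [muMap, mu1, mu2, mu3, cross_apply] <;> ring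

def muBilin : ℝ³ →L[ℝ] ℝ³ →L[ℝ] ℝ³ :=
  ((crossProduct ∘ₗ (negCoord 2).toLinearMap).compr₂
    (negCoord 1).toLinearMap).toContinuousBilinearMap

theorem muMap_eq_muBilin : muMap = fun w => muBilin w.1 w.2 :=
  funext fun w => muMap_eq_negCoord_cross w.1 w.2

theorem range_muBilin (q : ℝ³) :
    range (muBilin q : ℝ³ →ₗ[ℝ] ℝ³) =
      (range (crossProduct (negCoord 2 q))).map (negCoord 1).toLinearMap :=
  range_comp _ _

theorem range_muBilin_flip (p : ℝ³) :
    range (muBilin.flip p : ℝ³ →ₗ[ℝ] ℝ³) =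
      (range (crossProduct p)).map (negCoord 1).toLinearMap := by
  have h : (muBilin.flip p : ℝ³ →ₗ[ℝ] ℝ³) =
      (negCoord 1).toLinearMap ∘ₗ (-crossProduct p) ∘ₗ (negCoord 2).toLinearMap := by
    refine LinearMap.ext fun v => ?_
    show negCoord 1 (negCoord 2 v ⨯₃ p) = negCoord 1 (-(p ⨯₃ negCoord 2 v))
    rw [cross_anticomm]
  rw [h, range_comp, range_comp_of_range_eq_top _ (LinearEquiv.range _), range_neg]

/-- The derivative of the moment map `μ` has rank exactly 2 at every nonzero point of the
zero section `(q,0)`, `q ≠ 0`, and at every nonzero point `(0,p)`, `p ≠ 0`, of the fiber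
over the origin: the corresponding orbits of the lifted linear action are 2-dimensional. -/
theorem moment_map_rank_two_on_zero_section_and_fiber :
    (∀ q : Fin 3 → ℝ, q ≠ 0 →
      Module.finrank ℝ (LinearMap.range ((fderiv ℝ muMap (q, 0) : E6 →ₗ[ℝ] Fin 3 → ℝ))) = 2) ∧
    (∀ p : Fin 3 → ℝ, p ≠ 0 →
      Module.finrank ℝ (LinearMap.range ((fderiv ℝ muMap (0, p) : E6 →ₗ[ℝ] Fin 3 → ℝ))) = 2) := by
  rw [muMap_eq_muBilin]
  refine ⟨fun q hq => ?_, fun p hp => ?_⟩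
  · rw [range_fderiv_bilinear_at_inl, range_muBilin, LinearEquiv.finrank_map_eq]
    exact finrank_range_crossProduct ((negCoord 2).map_ne_zero_iff.mpr hq)
  · rw [range_fderiv_bilinear_at_inr, range_muBilin_flip, LinearEquiv.finrank_map_eq]
    exact finrank_range_crossProduct hp
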